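/- arXiv:2407.07062 — 3 statements merged into one kernel-verified Lean document; each statement's English description precedes it below -/
import Mathlib

section
/- Let a_1,...,a_n be real numbers with sum zero. Then the sum of their cubes satisfies |∑ a_i^3| ≤ ((n-2)/√(n(n-1))) · (∑ a_i^2)^(3/2). -/
/-!
Put `S = ∑ aᵢ²` and `x = √(S / (n(n-1)))`. Since the other `n - 1` terms sum to `-aᵢ`,
Cauchy–Schwarz gives `n aᵢ² ≤ (n-1) S`, i.e. `aᵢ ≤ (n-1) x`. Then
`(aᵢ + x)² ((n-1) x - aᵢ) ≥ 0` bounds `aᵢ³` by a quadratic in `aᵢ`; summing it, the linear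
term vanishes and what is left is `(n-2) x S`. The cubic is chosen to vanish at every entry of
the extremal vector `x (n-1, -1, …, -1)`. Replacing `a` by `-a` gives the lower bound.
-/

open Finset

section

variable {ι : Type*} [Fintype ι] {a : ι → ℝ}

theorem card_mul_sq_le_of_sum_eq_zero (hsum : ∑ i, a i = 0) (i : ι) :
    Fintype.card ι * a i ^ 2 ≤ (Fintype.card ι - 1) * ∑ j, a j ^ 2 := by
  classical
  have h_rest : ∑ j ∈ univ.erase i, a j = -a i := by
    linarith [add_sum_erase univ a (mem_univ i)]
  have h_rest_sq : ∑ j ∈ univ.erase i, a j ^ 2 = ∑ j, a j ^ 2 - a i ^ 2 := by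
    linarith [add_sum_erase univ (fun j => a j ^ 2) (mem_univ i)]
  have h_card : ((univ.erase i).card : ℝ) = Fintype.card ι - 1 := by
    rw [card_erase_of_mem (mem_univ i), card_univ,
      Nat.cast_pred (Fintype.card_pos_iff.2 ⟨i⟩)]
  have h_cs := sq_sum_le_card_mul_sum_sq (s := univ.erase i) (f := a)
  rw [h_rest, h_rest_sq, h_card, neg_sq] at h_cs
  linarith

theorem cube_le_of_le {t M : ℝ} (x : ℝ) (h : t ≤ M) :
    t ^ 3 ≤ (M - 2 * x) * t ^ 2 + (2 * M * x - x ^ 2) * t + M * x ^ 2 := by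
  nlinarith [mul_nonneg (sq_nonneg (t + x)) (sub_nonneg.2 h)]

theorem sum_cube_le_of_forall_le (hsum : ∑ i, a i = 0) {M : ℝ} (x : ℝ) (h : ∀ i, a i ≤ M) :
    ∑ i, a i ^ 3 ≤ (M - 2 * x) * ∑ i, a i ^ 2 + Fintype.card ι * M * x ^ 2 := by
  calc ∑ i, a i ^ 3
      ≤ ∑ i, ((M - 2 * x) * a i ^ 2 + (2 * M * x - x ^ 2) * a i + M * x ^ 2) :=
        sum_le_sum fun i _ => cube_le_of_le x (h i)
    _ = (M - 2 * x) * ∑ i, a i ^ 2 + (2 * M * x - x ^ 2) * ∑ i, a i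
          + Fintype.card ι * M * x ^ 2 := by
        simp only [sum_add_distrib, ← mul_sum, sum_const, card_univ, nsmul_eq_mul]
        ring
    _ = (M - 2 * x) * ∑ i, a i ^ 2 + Fintype.card ι * M * x ^ 2 := by
        rw [hsum]; ring

theorem sum_cube_le_of_sum_eq_zero (hι : 2 ≤ Fintype.card ι) (hsum : ∑ i, a i = 0) :
    ∑ i, a i ^ 3 ≤ ((Fintype.card ι - 2) / √(Fintype.card ι * (Fintype.card ι - 1))) *
      (∑ i, a i ^ 2) ^ ((3 : ℝ) / 2) := by
  have hn : (2 : ℝ) ≤ Fintype.card ι := by exact_mod_cast hι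
  set n : ℝ := (Fintype.card ι : ℝ)
  set S := ∑ i, a i ^ 2
  have hc : 0 < n * (n - 1) := by nlinarith
  have hS : 0 ≤ S := sum_nonneg fun i _ => sq_nonneg (a i)
  set x := √S / √(n * (n - 1))
  have hx : 0 ≤ x := by positivity
  have hx_sq : x ^ 2 = S / (n * (n - 1)) := by
    rw [div_pow, Real.sq_sqrt hS, Real.sq_sqrt hc.le]
  have h_le : ∀ i, a i ≤ (n - 1) * x := fun i => by
    have h_sq : a i ^ 2 ≤ ((n - 1) * x) ^ 2 := by
      rw [mul_pow, hx_sq]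
      have := card_mul_sq_le_of_sum_eq_zero hsum i
      rw [show (n - 1) ^ 2 * (S / (n * (n - 1))) = (n - 1) * S / n by
        field_simp [(by linarith : n - 1 ≠ 0)], le_div_iff₀ (by linarith)]
      linarith
    exact le_of_sq_le_sq h_sq (by nlinarith)
  calc ∑ i, a i ^ 3
      ≤ ((n - 1) * x - 2 * x) * S + n * ((n - 1) * x) * x ^ 2 :=
        sum_cube_le_of_forall_le hsum x h_le
    _ = (n - 2) * x * S := by
        rw [show n * ((n - 1) * x) * x ^ 2 = n * (n - 1) * x ^ 2 * x by ring, hx_sq,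
          mul_div_cancel₀ _ hc.ne']
        ring
    _ = (n - 2) / √(n * (n - 1)) * S ^ ((3 : ℝ) / 2) := by
        rw [show (3 : ℝ) / 2 = 1 + 1 / 2 by norm_num, Real.rpow_add' hS (by norm_num),
          Real.rpow_one, ← Real.sqrt_eq_rpow]
        ring

theorem abs_sum_cube_le_of_sum_eq_zero (hι : 2 ≤ Fintype.card ι) (hsum : ∑ i, a i = 0) :
    |∑ i, a i ^ 3| ≤ ((Fintype.card ι - 2) / √(Fintype.card ι * (Fintype.card ι - 1))) *
      (∑ i, a i ^ 2) ^ ((3 : ℝ) / 2) := by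
  have h_neg := sum_cube_le_of_sum_eq_zero (a := -a) hι (by simp [hsum])
  simp only [Pi.neg_apply, neg_sq, Odd.neg_pow (by decide : Odd 3), sum_neg_distrib] at h_neg
  exact abs_le.2 ⟨by linarith, sum_cube_le_of_sum_eq_zero hι hsum⟩

end

theorem sum_cubes_bound (n : ℕ) (hn : 2 ≤ n) (a : Fin n → ℝ)
    (hsum : ∑ i, a i = 0) :
    |∑ i, (a i)^3| ≤ (((n : ℝ) - 2) / Real.sqrt (n * (n - 1))) *
      (∑ i, (a i)^2) ^ ((3 : ℝ) / 2) := by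
  simpa using abs_sum_cube_le_of_sum_eq_zero (by simpa using hn) hsum
end

section
/- Let k, n be integers with 1 ≤ k ≤ n−1. Define α_i = n(i−1)(k+i−2)/k and β_j = n(j−1)(n−k+j−2)/(n−k) for i, j ≥ 1 (the Laplacian spectra of S^k(√(k/n)) and S^(n−k)(√((n−k)/n))). Then among the sums μ = α_i + β_j, the only values with μ − 2n < 0 are: μ = 0 (from i = j = 1), and μ = n (from (i,j) = (2,1) and (1,2)); all other sums satisfy α_i + β_j ≥ 2n. -/
theorem clifford_negative_eigenvalue_pairs (k n : ℕ) (hk : 1 ≤ k) (hkn : k ≤ n - 1)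
    (α β : ℕ → ℝ)
    (hα : ∀ i, α i = (n : ℝ) * ((i : ℝ) - 1) * ((k : ℝ) + (i : ℝ) - 2) / k)
    (hβ : ∀ j, β j = (n : ℝ) * ((j : ℝ) - 1) * (((n : ℝ) - k) + (j : ℝ) - 2) / ((n : ℝ) - k)) :
    α 1 + β 1 = 0 ∧ α 2 + β 1 = n ∧ α 1 + β 2 = n ∧
    (∀ i j, 1 ≤ i → 1 ≤ j →
      (α i + β j - 2 * n < 0 ↔ (i = 1 ∧ j = 1) ∨ (i = 2 ∧ j = 1) ∨ (i = 1 ∧ j = 2))) := by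
  have hn2 : 2 ≤ n := by omega
  have hkR : (1:ℝ) ≤ (k:ℝ) := by exact_mod_cast hk
  have hk1n : k + 1 ≤ n := by omega
  have hk1nR : (k:ℝ) + 1 ≤ (n:ℝ) := by exact_mod_cast hk1n
  have hnkR : (1:ℝ) ≤ (n:ℝ) - k := by linarith
  have hnR : (0:ℝ) < n := by
    have : (2:ℝ) ≤ n := by exact_mod_cast hn2
    linarith
  have hkpos : (0:ℝ) < k := by linarith
  have hnkpos : (0:ℝ) < (n:ℝ) - k := by linarith
  have hα1 : α 1 = 0 := by rw [hα]; norm_num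
  have hβ1 : β 1 = 0 := by rw [hβ]; norm_num
  have hα2 : α 2 = n := by
    rw [hα]; push_cast; field_simp; norm_num
  have hβ2 : β 2 = n := by
    rw [hβ]; push_cast
    have h : (n:ℝ) - k ≠ 0 := by linarith
    field_simp; norm_num
  have hαge : ∀ i, 2 ≤ i → (n:ℝ) ≤ α i := by
    intro i hi
    rw [hα, le_div_iff₀ hkpos]
    have h2 : (2:ℝ) ≤ (i:ℝ) := by exact_mod_cast hi
    nlinarith [mul_nonneg hnR.le (mul_nonneg hkpos.le (by linarith : (0:ℝ) ≤ (i:ℝ) - 2)),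
      mul_nonneg hnR.le (mul_nonneg (by linarith : (0:ℝ) ≤ (i:ℝ) - 1) (by linarith : (0:ℝ) ≤ (i:ℝ) - 2))]
  have hαge2 : ∀ i, 3 ≤ i → 2 * (n:ℝ) ≤ α i := by
    intro i hi
    rw [hα, le_div_iff₀ hkpos]
    have h2 : (3:ℝ) ≤ (i:ℝ) := by exact_mod_cast hi
    nlinarith [mul_nonneg hnR.le (mul_nonneg hkpos.le (by linarith : (0:ℝ) ≤ (i:ℝ) - 3)),
      mul_nonneg hnR.le (mul_nonneg (by linarith : (0:ℝ) ≤ (i:ℝ)) (by linarith : (0:ℝ) ≤ (i:ℝ) - 3))]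
  have hβge : ∀ j, 2 ≤ j → (n:ℝ) ≤ β j := by
    intro j hj
    rw [hβ, le_div_iff₀ hnkpos]
    have h2 : (2:ℝ) ≤ (j:ℝ) := by exact_mod_cast hj
    nlinarith [mul_nonneg hnR.le (mul_nonneg hnkpos.le (by linarith : (0:ℝ) ≤ (j:ℝ) - 2)),
      mul_nonneg hnR.le (mul_nonneg (by linarith : (0:ℝ) ≤ (j:ℝ) - 1) (by linarith : (0:ℝ) ≤ (j:ℝ) - 2))]
  have hβge2 : ∀ j, 3 ≤ j → 2 * (n:ℝ) ≤ β j := by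
    intro j hj
    rw [hβ, le_div_iff₀ hnkpos]
    have h2 : (3:ℝ) ≤ (j:ℝ) := by exact_mod_cast hj
    nlinarith [mul_nonneg hnR.le (mul_nonneg hnkpos.le (by linarith : (0:ℝ) ≤ (j:ℝ) - 3)),
      mul_nonneg hnR.le (mul_nonneg (by linarith : (0:ℝ) ≤ (j:ℝ)) (by linarith : (0:ℝ) ≤ (j:ℝ) - 3))]
  refine ⟨by rw [hα1, hβ1]; ring, by rw [hα2, hβ1]; ring, by rw [hα1, hβ2]; ring, ?_⟩
  intro i j hi hj
  constructor
  · intro hlt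
    by_contra hcon
    push_neg at hcon
    obtain ⟨h11, h21, h12⟩ := hcon
    rcases Nat.lt_or_ge i 2 with hI | hI
    · have hi1 : i = 1 := by omega
      subst hi1
      have hne1 : j ≠ 1 := h11 rfl
      have hne2 : j ≠ 2 := h12 rfl
      have hj3 : 3 ≤ j := by omega
      have := hβge2 j hj3
      rw [hα1] at hlt
      linarith
    · rcases Nat.lt_or_ge j 2 with hJ | hJ
      · have hj1 : j = 1 := by omega
        subst hj1
        have hne2 : i ≠ 2 := fun h => (h21 h) rfl
        have hi3 : 3 ≤ i := by omega
        have := hαge2 i hi3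
        rw [hβ1] at hlt
        linarith
      · have := hαge i hI
        have := hβge j hJ
        linarith
  · rintro (⟨rfl, rfl⟩ | ⟨rfl, rfl⟩ | ⟨rfl, rfl⟩)
    · rw [hα1, hβ1]; linarith
    · rw [hα2, hβ1]; linarith
    · rw [hα1, hβ2]; linarith
end

section
/- Kato-type inequality consequence: if T is a trace-free symmetric 2-tensor on an n-dimensional Riemannian manifold with totally symmetric covariant derivative, then |∇|T|²|² ≤ (4n/(n+2))·|T|²·|∇T|². In particular 4|T|²·|∇|T||² ≤ (4n/(n+2))|T|²|∇T|², hence |∇|T||² ≤ (n/(n+2))|∇T|² wherever T ≠ 0. -/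
/-!
Write `t = T x` and `s k i j = ∂ₖ T i j (x)`; the hypotheses make `s` totally symmetric and
trace-free, and `∇|T|² = 2 w` with `w k = ⟨t, s k⟩`. Contracting with `w` itself,
`|w|² = ⟨t, s(w)⟩ ≤ |t| |s(w)|`, so everything reduces to the refined bound
`|s(v)|² ≤ n/(n+2) |s|² |v|²` for a totally symmetric trace-free `s` and a vector `v`.

For that, put `a = s(v)` (symmetric, trace-free) and `b = a v`, let `X` and `Y` be the cyclic
symmetrisations of `v ⊗ a` and `δ ⊗ b`, and apply Cauchy–Schwarz to `⟨s, X - c Y⟩ = ⟨s, X⟩`: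
`⟨s, X⟩ = 3|a|²`, `|X|² = 3(|v|²|a|² + 2|b|²)`, `⟨X, Y⟩ = 6|b|²`, `|Y|² = 3(n+2)|b|²`.
The best choice `c = 2/(n+2)` leaves `|X - c Y|² = 3|v|²|a|² + 6n/(n+2) |b|²`, and the trace-free
symmetric `a` satisfies `n |b|² ≤ (n-1) |a|² |v|²` by the same argument one order lower.
The bound for `|∇|T||` is the first one divided by `4|T|²`.
-/

open Finset

theorem le_of_mul_self_le_mul {a b : ℝ} (hb : 0 ≤ b) (h : a * a ≤ b * a) : a ≤ b := by
  rcases le_or_gt a 0 with ha | ha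
  · linarith
  · exact le_of_mul_le_mul_right h ha

theorem sq_sum_mul_le_of_sum_mul_eq_zero {κ : Type*} [Fintype κ] {s y : κ → ℝ}
    (hsy : ∑ p, s p * y p = 0) (x : κ → ℝ) (c : ℝ) :
    (∑ p, s p * x p) ^ 2 ≤
      (∑ p, s p ^ 2) * (∑ p, x p ^ 2 - 2 * c * ∑ p, x p * y p + c ^ 2 * ∑ p, y p ^ 2) := by
  have hx : ∑ p, s p * x p = ∑ p, s p * (x p - c * y p) := by
    simp only [mul_sub, sum_sub_distrib, mul_left_comm _ c, ← mul_sum, hsy, mul_zero, sub_zero]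
  have hnorm : ∑ p, (x p - c * y p) ^ 2 =
      ∑ p, x p ^ 2 - 2 * c * ∑ p, x p * y p + c ^ 2 * ∑ p, y p ^ 2 := by
    have hsq : ∀ p, (x p - c * y p) ^ 2 = x p ^ 2 - 2 * c * (x p * y p) + c ^ 2 * y p ^ 2 :=
      fun p => by ring
    simp only [hsq, sum_add_distrib, sum_sub_distrib, ← mul_sum]
  rw [hx, ← hnorm]
  exact sum_mul_sq_le_sq_mul_sq _ _ _

section TraceFreeMatrix

variable {ι : Type*} [Fintype ι] [DecidableEq ι]

theorem sq_two_mul_sum_sq_mulVec_le {t : ι → ι → ℝ} (ht : ∀ i j, t i j = t j i)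
    (htr : ∑ i, t i i = 0) (u : ι → ℝ) (c : ℝ) :
    (2 * ∑ i, (∑ j, t i j * u j) ^ 2) ^ 2 ≤ (∑ i, ∑ j, t i j ^ 2) *
      (2 * (∑ i, u i ^ 2) * (∑ i, (∑ j, t i j * u j) ^ 2) +
        2 * (∑ i, u i * ∑ j, t i j * u j) ^ 2 - 4 * c * (∑ i, u i * ∑ j, t i j * u j) +
        c ^ 2 * Fintype.card ι) := by
  set v := fun i => ∑ j, t i j * u j
  have htx : ∑ i, ∑ j, t i j * (u i * v j + v i * u j) = 2 * ∑ i, v i ^ 2 := by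
    calc _ = ∑ i, (∑ j, t i j * u j) * v i + ∑ i, (∑ j, t i j * u j) * v i := by
          simp only [mul_add, sum_add_distrib, sum_mul]
          rw [sum_comm]
          congr 1 <;> exact sum_congr rfl fun _ _ => sum_congr rfl fun _ _ => by rw [ht]; ring
      _ = 2 * ∑ i, v i ^ 2 := by simp only [sq]; ring
  have hxx : ∑ i, ∑ j, (u i * v j + v i * u j) ^ 2 =
      2 * (∑ i, u i ^ 2) * (∑ i, v i ^ 2) + 2 * (∑ i, u i * v i) ^ 2 := by
    have h : ∀ i j, (u i * v j + v i * u j) ^ 2 =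
        u i ^ 2 * v j ^ 2 + v i ^ 2 * u j ^ 2 + 2 * (u i * v i * (u j * v j)) := fun i j => by ring
    simp only [h, sum_add_distrib, ← mul_sum, ← sum_mul]
    ring
  have hxy : ∑ i, ∑ j, (u i * v j + v i * u j) * (if i = j then 1 else 0) =
      2 * ∑ i, u i * v i := by
    simp only [mul_ite, mul_one, mul_zero, sum_ite_eq, mem_univ, if_true, mul_sum]
    exact sum_congr rfl fun _ _ => by ring
  have hyy : ∑ i : ι, ∑ j : ι, (if i = j then (1 : ℝ) else 0) ^ 2 = Fintype.card ι := by
    simp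
  have hcs := sq_sum_mul_le_of_sum_mul_eq_zero (κ := ι × ι) (s := fun p => t p.1 p.2)
    (y := fun p => if p.1 = p.2 then 1 else 0) (by simpa [Fintype.sum_prod_type] using htr)
    (fun p => u p.1 * v p.2 + v p.1 * u p.2) c
  simp only [Fintype.sum_prod_type] at hcs
  rw [htx, hxx, hxy, hyy] at hcs
  convert hcs using 2
  ring

theorem card_mul_sum_sq_mulVec_le {t : ι → ι → ℝ} (ht : ∀ i j, t i j = t j i)
    (htr : ∑ i, t i i = 0) (u : ι → ℝ) :
    (Fintype.card ι : ℝ) * ∑ i, (∑ j, t i j * u j) ^ 2 ≤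
      (Fintype.card ι - 1) * (∑ i, ∑ j, t i j ^ 2) * ∑ i, u i ^ 2 := by
  obtain hsmall | hlarge := le_or_gt (Fintype.card ι) 1
  · have : Subsingleton ι := Fintype.card_le_one_iff_subsingleton.mp hsmall
    have ht₀ : ∀ i j, t i j = 0 := fun i j => by
      rw [Subsingleton.elim j i, ← htr, Fintype.sum_subsingleton _ i]
    simp [ht₀]
  -- `c = 2⟨u, t u⟩ / n` makes `u ⊗ t u + t u ⊗ u - c δ` trace-free
  have hcs := sq_two_mul_sum_sq_mulVec_le ht htr u
    (2 * (∑ i, u i * ∑ j, t i j * u j) / Fintype.card ι)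
  set N : ℝ := (Fintype.card ι : ℝ)
  set V := ∑ i, (∑ j, t i j * u j) ^ 2
  set q := ∑ i, u i * ∑ j, t i j * u j
  set U := ∑ i, u i ^ 2
  set A := ∑ i, ∑ j, t i j ^ 2
  have hN : (2 : ℝ) ≤ N := Nat.ofNat_le_cast.mpr hlarge
  have hq : q ^ 2 ≤ U * V := sum_mul_sq_le_sq_mul_sq univ u fun i => ∑ j, t i j * u j
  have hA : 0 ≤ A := by positivity
  have hN' : 0 ≤ 2 - 4 / N := by
    rw [sub_nonneg, div_le_iff₀ (by linarith)]; linarith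
  have hG : 2 * U * V + 2 * q ^ 2 - 4 * (2 * q / N) * q + (2 * q / N) ^ 2 * N =
      2 * U * V + (2 - 4 / N) * q ^ 2 := by
    field_simp
    ring
  rw [hG] at hcs
  have key : N * V * V ≤ (N - 1) * A * U * V := by
    calc N * V * V = N / 4 * (2 * V) ^ 2 := by ring
      _ ≤ N / 4 * (A * (2 * U * V + (2 - 4 / N) * q ^ 2)) := by gcongr
      _ ≤ N / 4 * (A * (2 * U * V + (2 - 4 / N) * (U * V))) := by gcongr
      _ = (N - 1) * A * U * V := by field_simp; ring
  rcases (show 0 ≤ V by positivity).eq_or_lt with hV | hV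
  · rw [← hV, mul_zero]
    exact mul_nonneg (mul_nonneg (by linarith) hA) (by positivity)
  · exact le_of_mul_le_mul_right key hV

end TraceFreeMatrix

section CyclicSum

variable {ι : Type*}

def cyclicSum (f : ι → ι → ι → ℝ) (k i j : ι) : ℝ := f k i j + f i j k + f j k i

theorem cyclicSum_rotate (f : ι → ι → ι → ℝ) (k i j : ι) :
    cyclicSum f i j k = cyclicSum f k i j := by
  unfold cyclicSum; ring

variable [Fintype ι]

theorem sum_rotate (F : ι → ι → ι → ℝ) :
    ∑ k, ∑ i, ∑ j, F i j k = ∑ k, ∑ i, ∑ j, F k i j :=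
  sum_comm.trans (sum_congr rfl fun _ _ => sum_comm)

theorem sum_mul_rotate {s : ι → ι → ι → ℝ} (hs : ∀ k i j, s i j k = s k i j)
    (f : ι → ι → ι → ℝ) :
    ∑ k, ∑ i, ∑ j, s k i j * f i j k = ∑ k, ∑ i, ∑ j, s k i j * f k i j :=
  (sum_rotate fun a b c => s c a b * f a b c).trans <|
    sum_congr rfl fun k _ => sum_congr rfl fun i _ => sum_congr rfl fun j _ => by
      rw [hs i j k, hs k i j]

theorem sum_mul_cyclicSum {s : ι → ι → ι → ℝ} (hs : ∀ k i j, s i j k = s k i j)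
    (f : ι → ι → ι → ℝ) :
    ∑ k, ∑ i, ∑ j, s k i j * cyclicSum f k i j = 3 * ∑ k, ∑ i, ∑ j, s k i j * f k i j := by
  have h₂ := sum_mul_rotate hs f
  have h₃ := sum_mul_rotate hs fun a b c => f b c a
  simp only [cyclicSum, mul_add, sum_add_distrib] at h₃ ⊢
  rw [h₃, h₂]
  ring

theorem sum_sq_cyclicSum_mul {v : ι → ℝ} {a : ι → ι → ℝ} (ha : ∀ i j, a i j = a j i) :
    ∑ k, ∑ i, ∑ j, cyclicSum (fun k i j => v k * a i j) k i j ^ 2 =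
      3 * ((∑ k, v k ^ 2) * (∑ i, ∑ j, a i j ^ 2) + 2 * ∑ i, (∑ j, a i j * v j) ^ 2) := by
  have h₁ : ∑ k, ∑ i, ∑ j, v k * a i j * (v k * a i j) =
      (∑ k, v k ^ 2) * ∑ i, ∑ j, a i j ^ 2 := by
    rw [sum_mul]
    simp only [mul_sum]
    exact sum_congr rfl fun _ _ => sum_congr rfl fun _ _ => sum_congr rfl fun _ _ => by ring
  have h₂ : ∑ k, ∑ i, ∑ j, v i * a j k * (v k * a i j) = ∑ i, (∑ j, a i j * v j) ^ 2 := by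
    calc _ = ∑ k, ∑ j, v k * a j k * ∑ i, a j i * v i := by
          refine sum_congr rfl fun k _ => ?_
          rw [sum_comm]
          simp only [mul_sum]
          exact sum_congr rfl fun j _ => sum_congr rfl fun i _ => by rw [ha i j]; ring
      _ = _ := by
          rw [sum_comm]
          simp only [sq, sum_mul]
          exact sum_congr rfl fun j _ => sum_congr rfl fun k _ => by rw [ha j k]; ring
  have h₃ : ∑ k, ∑ i, ∑ j, v j * a k i * (v k * a i j) = ∑ i, (∑ j, a i j * v j) ^ 2 := by
    rw [sum_comm]
    simp only [sq, sum_mul_sum]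
    exact sum_congr rfl fun i _ => sum_congr rfl fun k _ => sum_congr rfl fun j _ => by
      rw [ha k i]; ring
  simp only [sq (cyclicSum _ _ _ _)]
  rw [sum_mul_cyclicSum (cyclicSum_rotate _)]
  simp only [cyclicSum, add_mul, sum_add_distrib]
  rw [h₁, h₂, h₃]
  ring

theorem sum_cyclicSum_mul_diag {v : ι → ℝ} {a : ι → ι → ℝ} (ha : ∀ i j, a i j = a j i)
    (ha₀ : ∑ i, a i i = 0) (k : ι) :
    ∑ i, cyclicSum (fun k i j => v k * a i j) k i i = 2 * ∑ j, a k j * v j := by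
  have h : ∀ i, cyclicSum (fun k i j => v k * a i j) k i i = v k * a i i + 2 * (a k i * v i) :=
    fun i => by simp only [cyclicSum]; rw [ha i k]; ring
  simp only [h, sum_add_distrib, ← mul_sum, ha₀, mul_zero, zero_add]

variable [DecidableEq ι]

theorem sum_mul_cyclicSum_ite {g : ι → ι → ι → ℝ} (hg : ∀ k i j, g i j k = g k i j)
    (b : ι → ℝ) :
    ∑ k, ∑ i, ∑ j, g k i j * cyclicSum (fun k i j => if i = j then b k else 0) k i j =
      3 * ∑ k, (∑ i, g k i i) * b k := by
  rw [sum_mul_cyclicSum hg]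
  simp only [mul_ite, mul_zero, sum_ite_eq, mem_univ, if_true, sum_mul]

theorem sum_cyclicSum_ite_diag (b : ι → ℝ) (k : ι) :
    ∑ i, cyclicSum (fun k i j => if i = j then b k else 0) k i i =
      (Fintype.card ι + 2) * b k := by
  simp only [cyclicSum, ↓reduceIte, sum_add_distrib, sum_const, card_univ, nsmul_eq_mul,
    sum_ite_eq', mem_univ, sum_ite_eq]
  ring

theorem sq_sum_mul_cyclicSum_le {s : ι → ι → ι → ℝ} (hs : ∀ k i j, s i j k = s k i j)
    (hs₀ : ∀ k, ∑ i, s k i i = 0) {a : ι → ι → ℝ} (ha : ∀ i j, a i j = a j i)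
    (ha₀ : ∑ i, a i i = 0) (v : ι → ℝ) :
    (∑ k, ∑ i, ∑ j, s k i j * cyclicSum (fun k i j => v k * a i j) k i j) ^ 2 ≤
      (∑ k, ∑ i, ∑ j, s k i j ^ 2) * (3 * (∑ k, v k ^ 2) * (∑ i, ∑ j, a i j ^ 2) +
        6 / (Fintype.card ι + 2) * (Fintype.card ι * ∑ i, (∑ j, a i j * v j) ^ 2)) := by
  set N : ℝ := (Fintype.card ι : ℝ)
  set b := fun i => ∑ j, a i j * v j
  set B := ∑ i, b i ^ 2
  set X := cyclicSum fun k i j => v k * a i j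
  set Y := cyclicSum fun k i j => if i = j then b k else 0
  have hsY : ∑ k, ∑ i, ∑ j, s k i j * Y k i j = 0 := by
    simp only [Y, sum_mul_cyclicSum_ite hs, hs₀, zero_mul, sum_const_zero, mul_zero]
  have hXY : ∑ k, ∑ i, ∑ j, X k i j * Y k i j = 6 * B := by
    simp only [Y, sum_mul_cyclicSum_ite (cyclicSum_rotate _), X, sum_cyclicSum_mul_diag ha ha₀,
      B, b]
    rw [mul_sum, mul_sum]
    exact sum_congr rfl fun _ _ => by ring
  have hYY : ∑ k, ∑ i, ∑ j, Y k i j ^ 2 = 3 * (N + 2) * B := by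
    simp only [sq, Y, sum_mul_cyclicSum_ite (cyclicSum_rotate _), sum_cyclicSum_ite_diag, B,
      mul_sum]
    exact sum_congr rfl fun _ _ => by ring
  have hcs := sq_sum_mul_le_of_sum_mul_eq_zero (κ := ι × ι × ι)
    (s := fun p => s p.1 p.2.1 p.2.2) (y := fun p => Y p.1 p.2.1 p.2.2)
    (by simpa only [Fintype.sum_prod_type] using hsY) (fun p => X p.1 p.2.1 p.2.2) (2 / (N + 2))
  simp only [Fintype.sum_prod_type] at hcs
  rw [sum_sq_cyclicSum_mul ha, hXY, hYY] at hcs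
  have hN : N + 2 ≠ 0 := by positivity
  convert hcs using 2
  simp only [B, b]
  field_simp
  ring

theorem sum_sq_contract_le {s : ι → ι → ι → ℝ} (hs₁ : ∀ k i j, s k i j = s k j i)
    (hs₂ : ∀ k i j, s k i j = s i k j) (hs₀ : ∀ k, ∑ i, s k i i = 0) (v : ι → ℝ) :
    ∑ i, ∑ j, (∑ k, v k * s k i j) ^ 2 ≤
      Fintype.card ι / (Fintype.card ι + 2) * (∑ k, ∑ i, ∑ j, s k i j ^ 2) * ∑ k, v k ^ 2 := by
  have hrot : ∀ k i j, s i j k = s k i j := fun k i j => by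
    rw [hs₂, hs₁, hs₂, hs₁]
  set a := fun i j => ∑ k, v k * s k i j
  have ha : ∀ i j, a i j = a j i := fun i j => sum_congr rfl fun k _ => by rw [hs₁]
  have ha₀ : ∑ i, a i i = 0 := by
    simp only [a]; rw [sum_comm]; simp only [← mul_sum, hs₀, mul_zero, sum_const_zero]
  have hsX : ∑ k, ∑ i, ∑ j, s k i j * cyclicSum (fun k i j => v k * a i j) k i j =
      3 * ∑ i, ∑ j, a i j ^ 2 := by
    rw [sum_mul_cyclicSum hrot, sum_comm]
    congr 1
    refine sum_congr rfl fun i _ => ?_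
    rw [sum_comm]
    refine sum_congr rfl fun j _ => ?_
    calc ∑ k, s k i j * (v k * a i j) = (∑ k, v k * s k i j) * a i j := by
          rw [sum_mul]; exact sum_congr rfl fun k _ => by ring
      _ = a i j ^ 2 := (sq _).symm
  have hcs := sq_sum_mul_cyclicSum_le hrot hs₀ ha ha₀ v
  have hB := card_mul_sum_sq_mulVec_le ha ha₀ v
  rw [hsX] at hcs
  set N : ℝ := (Fintype.card ι : ℝ)
  set P := ∑ i, ∑ j, a i j ^ 2
  set S := ∑ k, ∑ i, ∑ j, s k i j ^ 2
  set V := ∑ k, v k ^ 2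
  have hN₀ : 0 ≤ N := by positivity
  have hS : 0 ≤ S := by positivity
  have hV : 0 ≤ V := by positivity
  clear_value N a P S V
  have key : 9 * (P * P) ≤ 9 * (N / (N + 2) * S * V * P) := by
    calc 9 * (P * P) = (3 * P) ^ 2 := by ring
      _ ≤ S * (3 * V * P + 6 / (N + 2) * (N * _)) := hcs
      _ ≤ S * (3 * V * P + 6 / (N + 2) * ((N - 1) * P * V)) := by gcongr
      _ = 9 * (N / (N + 2) * S * V * P) := by field_simp; ring
  exact le_of_mul_self_le_mul (by positivity) (by linarith)

theorem sum_sq_sum_mul_le {s : ι → ι → ι → ℝ} (hs₁ : ∀ k i j, s k i j = s k j i)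
    (hs₂ : ∀ k i j, s k i j = s i k j) (hs₀ : ∀ k, ∑ i, s k i i = 0) (t : ι → ι → ℝ) :
    ∑ k, (∑ i, ∑ j, t i j * s k i j) ^ 2 ≤
      Fintype.card ι / (Fintype.card ι + 2) * (∑ i, ∑ j, t i j ^ 2) *
        ∑ k, ∑ i, ∑ j, s k i j ^ 2 := by
  set w := fun k => ∑ i, ∑ j, t i j * s k i j
  set W := ∑ k, w k ^ 2
  have hW : W = ∑ i, ∑ j, t i j * ∑ k, w k * s k i j := by
    calc W = ∑ k, w k * ∑ i, ∑ j, t i j * s k i j := sum_congr rfl fun k _ => sq (w k)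
      _ = _ := by
        simp only [mul_sum]
        rw [sum_comm]
        refine sum_congr rfl fun i _ => ?_
        rw [sum_comm]
        exact sum_congr rfl fun j _ => sum_congr rfl fun k _ => by ring
  have hcs : W ^ 2 ≤ (∑ i, ∑ j, t i j ^ 2) * ∑ i, ∑ j, (∑ k, w k * s k i j) ^ 2 := by
    rw [hW]
    simpa only [Fintype.sum_prod_type] using sum_mul_sq_le_sq_mul_sq univ
      (fun p : ι × ι => t p.1 p.2) (fun p => ∑ k, w k * s k p.1 p.2)
  have key : W * W ≤ Fintype.card ι / (Fintype.card ι + 2) * (∑ i, ∑ j, t i j ^ 2) *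
      (∑ k, ∑ i, ∑ j, s k i j ^ 2) * W := by
    calc W * W = W ^ 2 := (sq W).symm
      _ ≤ (∑ i, ∑ j, t i j ^ 2) * ∑ i, ∑ j, (∑ k, w k * s k i j) ^ 2 := hcs
      _ ≤ (∑ i, ∑ j, t i j ^ 2) * (Fintype.card ι / (Fintype.card ι + 2) *
            (∑ k, ∑ i, ∑ j, s k i j ^ 2) * W) := by
          gcongr; exact sum_sq_contract_le hs₁ hs₂ hs₀ w
      _ = _ := by ring
  exact le_of_mul_self_le_mul (by positivity) key

end CyclicSum

section Calculus

variable {E : Type*} [NormedAddCommGroup E] [NormedSpace ℝ E] {ι : Type*} [Fintype ι] {x : E}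

theorem fderiv_sum_sq_apply {F : E → Matrix ι ι ℝ}
    (hF : ∀ i j, DifferentiableAt ℝ (fun y => F y i j) x) (v : E) :
    fderiv ℝ (fun y => ∑ i, ∑ j, F y i j ^ 2) x v =
      2 * ∑ i, ∑ j, F x i j * fderiv ℝ (fun y => F y i j) x v := by
  have hsq : ∀ i j, HasFDerivAt (fun y => F y i j ^ 2)
      ((2 * F x i j) • fderiv ℝ (fun y => F y i j) x) x := fun i j => by
    simpa using (hF i j).hasFDerivAt.pow 2
  rw [(HasFDerivAt.fun_sum fun i _ => HasFDerivAt.fun_sum fun j _ => hsq i j).fderiv]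
  simp [mul_sum, mul_assoc]

theorem sum_fderiv_diag_eq_zero {F : E → Matrix ι ι ℝ} (htr : ∀ y, (F y).trace = 0)
    (hF : ∀ i, DifferentiableAt ℝ (fun y => F y i i) x) (v : E) :
    ∑ i, fderiv ℝ (fun y => F y i i) x v = 0 := by
  have h : (fun y => ∑ i, F y i i) = fun _ => 0 := funext htr
  rw [← _root_.sum_apply, ← fderiv_fun_sum fun i _ => hF i, h, fderiv_fun_const]
  rfl

theorem sum_sq_fderiv_sqrt_apply {f : E → ℝ} (hf : DifferentiableAt ℝ f x) (hx : 0 < f x)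
    (e : ι → E) :
    ∑ k, fderiv ℝ (fun y => √(f y)) x (e k) ^ 2 = (∑ k, fderiv ℝ f x (e k) ^ 2) / (4 * f x) := by
  have h4 : (2 * √(f x)) ^ 2 = 4 * f x := by rw [mul_pow, Real.sq_sqrt hx.le]; norm_num
  simp only [fderiv_sqrt hf hx.ne', _root_.smul_apply, smul_eq_mul, mul_pow,
    ← mul_sum, one_div, inv_pow, h4]
  ring

end Calculus

theorem kato_type_inequality_general (n : ℕ)
    (T : EuclideanSpace ℝ (Fin n) → Matrix (Fin n) (Fin n) ℝ)
    (hsymm : ∀ x i j, T x i j = T x j i)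
    (htr : ∀ x, Matrix.trace (T x) = 0)
    (hdiff : ∀ i j, Differentiable ℝ (fun y => T y i j))
    (htot : ∀ x i j k,
      fderiv ℝ (fun y => T y i j) x (EuclideanSpace.single k 1)
        = fderiv ℝ (fun y => T y k j) x (EuclideanSpace.single i 1))
    (x : EuclideanSpace ℝ (Fin n)) :
    (∑ k, (fderiv ℝ (fun y => ∑ i, ∑ j, (T y i j)^2) x
        (EuclideanSpace.single k 1))^2)
      ≤ (4 * n / (n + 2)) * (∑ i, ∑ j, (T x i j)^2) *
        (∑ k, ∑ i, ∑ j,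
          (fderiv ℝ (fun y => T y i j) x (EuclideanSpace.single k 1))^2) ∧
    (0 < ∑ i, ∑ j, (T x i j)^2 →
      (∑ k, (fderiv ℝ (fun y => Real.sqrt (∑ i, ∑ j, (T y i j)^2)) x
          (EuclideanSpace.single k 1))^2)
        ≤ ((n : ℝ) / (n + 2)) *
          (∑ k, ∑ i, ∑ j,
            (fderiv ℝ (fun y => T y i j) x (EuclideanSpace.single k 1))^2)) := by
  have hD : ∀ i j, DifferentiableAt ℝ (fun y => T y i j) x := fun i j => hdiff i j x
  set s : Fin n → Fin n → Fin n → ℝ := fun k i j =>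
    fderiv ℝ (fun y => T y i j) x (EuclideanSpace.single k 1)
  have hs : ∀ k i j, fderiv ℝ (fun y => T y i j) x (EuclideanSpace.single k 1) = s k i j :=
    fun _ _ _ => rfl
  simp only [hs]
  have hs₁ : ∀ k i j, s k i j = s k j i := fun k i j => by
    simp only [s, show (fun y => T y i j) = fun y => T y j i from funext fun y => hsymm y i j]
  have hbound := sum_sq_sum_mul_le hs₁ (fun k i j => htot x i j k)
    (fun k => sum_fderiv_diag_eq_zero htr (fun i => hD i i) _) (T x)
  rw [Fintype.card_fin] at hbound
  have hgrad : ∑ k, (fderiv ℝ (fun y => ∑ i, ∑ j, T y i j ^ 2) x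
      (EuclideanSpace.single k 1)) ^ 2 ≤
      4 * n / (n + 2) * (∑ i, ∑ j, T x i j ^ 2) * ∑ k, ∑ i, ∑ j, s k i j ^ 2 := by
    simp only [fderiv_sum_sq_apply hD, hs, mul_pow, ← mul_sum]
    calc _ ≤ 2 ^ 2 * (n / (n + 2) * (∑ i, ∑ j, T x i j ^ 2) * ∑ k, ∑ i, ∑ j, s k i j ^ 2) := by
          gcongr
      _ = _ := by ring
  refine ⟨hgrad, fun hpos => ?_⟩
  rw [sum_sq_fderiv_sqrt_apply (f := fun y => ∑ i, ∑ j, T y i j ^ 2) (by fun_prop) hpos,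
    div_le_iff₀ (by positivity)]
  calc _ ≤ _ := hgrad
    _ = _ := by ring

/-- Kato-type inequality for a trace-free symmetric 2-tensor field `T` on
`ℝⁿ` whose covariant derivative is totally symmetric:
`|∇|T|²|² ≤ (4n/(n+2))·|T|²·|∇T|²`, and consequently
`|∇|T||² ≤ (n/(n+2))·|∇T|²` wherever `T ≠ 0`. -/
theorem kato_type_inequality (n : ℕ) (hn : 1 ≤ n)
    (T : EuclideanSpace ℝ (Fin n) → Matrix (Fin n) (Fin n) ℝ)
    (hsymm : ∀ x i j, T x i j = T x j i)
    (htr : ∀ x, Matrix.trace (T x) = 0)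
    (hdiff : ∀ i j, Differentiable ℝ (fun y => T y i j))
    (htot : ∀ x i j k,
      fderiv ℝ (fun y => T y i j) x (EuclideanSpace.single k 1)
        = fderiv ℝ (fun y => T y k j) x (EuclideanSpace.single i 1))
    (x : EuclideanSpace ℝ (Fin n)) :
    (∑ k, (fderiv ℝ (fun y => ∑ i, ∑ j, (T y i j)^2) x
        (EuclideanSpace.single k 1))^2)
      ≤ (4 * n / (n + 2)) * (∑ i, ∑ j, (T x i j)^2) *
        (∑ k, ∑ i, ∑ j,
          (fderiv ℝ (fun y => T y i j) x (EuclideanSpace.single k 1))^2) ∧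
    (0 < ∑ i, ∑ j, (T x i j)^2 →
      (∑ k, (fderiv ℝ (fun y => Real.sqrt (∑ i, ∑ j, (T y i j)^2)) x
          (EuclideanSpace.single k 1))^2)
        ≤ ((n : ℝ) / (n + 2)) *
          (∑ k, ∑ i, ∑ j,
            (fderiv ℝ (fun y => T y i j) x (EuclideanSpace.single k 1))^2)) :=
  kato_type_inequality_general n T hsymm htr hdiff htot x
end
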